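/- arXiv:2505.10178 — 2 statements merged into one kernel-verified Lean document; each statement's English description precedes it below -/
import Mathlib

section
/- Let A₁, A₂ be real s×s matrices all of whose entries are nonnegative integers. If A₂ ≤ I entrywise, where I is the identity matrix, then the pair (A₁, A₂) has the finiteness property. -/
open Matrix

/-- Operator norm on real s×s matrices induced by the Euclidean norm. -/
noncomputable def l2OpNorm {s : ℕ} (A : Matrix (Fin s) (Fin s) ℝ) : ℝ :=
  ‖Matrix.toEuclideanCLM (𝕜 := ℝ) A‖

/-- Spectral radius of a real matrix viewed as a complex matrix. -/
noncomputable def specRad {s : ℕ} (A : Matrix (Fin s) (Fin s) ℝ) : ℝ :=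
  (spectralRadius ℂ (A.map (Complex.ofReal : ℝ → ℂ))).toReal

/-- The ordered product `A (w (n-1)) * ⋯ * A (w 0)`. -/
noncomputable def wordProd {s J n : ℕ} (A : Fin J → Matrix (Fin s) (Fin s) ℝ)
    (w : Fin n → Fin J) : Matrix (Fin s) (Fin s) ℝ :=
  ((List.ofFn fun i => A (w i)).reverse).prod

/-- Joint spectral radius of a finite family of real s×s matrices. -/
noncomputable def JSR {s J : ℕ} (A : Fin J → Matrix (Fin s) (Fin s) ℝ) : ℝ :=
  ⨅ n : {m : ℕ // 1 ≤ m}, ⨆ w : Fin (n : ℕ) → Fin J,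
    l2OpNorm (wordProd A w) ^ (1 / ((n : ℕ) : ℝ))

/-- The pair has the finiteness property. -/
def FinitenessProperty {s : ℕ} (A : Fin 2 → Matrix (Fin s) (Fin s) ℝ) : Prop :=
  ∃ n : ℕ, 1 ≤ n ∧ ∃ w : Fin n → Fin 2,
    specRad (wordProd A w) ^ (1 / (n : ℝ)) = JSR A

/-!
Since `0 ≤ A₂ ≤ I`, a word in `A₁, A₂` with `c` letters `A₁` lies entrywise between `0` and
`A₁ ^ c`, so Gelfand's formula gives `JSR ≤ max 1 ρ(A₁)`; conversely `ρ(W) ^ (1 / n) ≤ JSR` for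
every word `W` of length `n`. If `JSR ≤ ρ(A₁)`, the one-letter word `A₁` attains the JSR.
Otherwise `0 < JSR ≤ 1`, so some word of length `s + 1` is nonzero. A nonzero entry of a product
of nonnegative matrices is carried by a path of indices along nonzero entries of the letters;
this path visits `s + 2` indices in `Fin s`, so it contains a cycle, and the subword along the
cycle is a word `V` with a nonzero, hence `≥ 1`, integer diagonal entry. Then `(V ^ j) k k ≥ 1`
for all `j`, so `ρ(V) ≥ 1 ≥ JSR`.
-/

open Filter Topology
open scoped Matrix.Norms.L2Operator

namespace Matrix

variable {n R : Type*} [Fintype n] [DecidableEq n]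

section Semiring

variable [Semiring R]

variable (n R) in
def natMatrices : Subsemiring (Matrix n n R) :=
  (Nat.castRingHom R).mapMatrix.rangeS

lemma mem_natMatrices_iff {M : Matrix n n R} :
    M ∈ natMatrices n R ↔ ∀ i j, ∃ k : ℕ, M i j = k := by
  refine ⟨fun ⟨N, hN⟩ i j ↦ ⟨N i j, by simp [← hN]⟩, fun h ↦ ?_⟩
  choose N hN using h
  exact ⟨of N, ext fun i j ↦ (hN i j).symm⟩

variable [PartialOrder R] [IsOrderedRing R]

variable (n R) in
def nonnegMatrices : Subsemiring (Matrix n n R) where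
  carrier := {M | ∀ i j, 0 ≤ M i j}
  mul_mem' hM hN i j := Finset.sum_nonneg fun k _ ↦ mul_nonneg (hM i k) (hN k j)
  one_mem' i j := by by_cases h : i = j <;> simp [one_apply, h]
  add_mem' hM hN i j := add_nonneg (hM i j) (hN i j)
  zero_mem' _ _ := le_rfl

lemma natMatrices_le_nonnegMatrices : natMatrices n R ≤ nonnegMatrices n R := by
  intro M hM i j
  obtain ⟨k, hk⟩ := mem_natMatrices_iff.mp hM i j
  exact hk ▸ Nat.cast_nonneg k

lemma one_le_of_mem_natMatrices {M : Matrix n n R} (hM : M ∈ natMatrices n R) {i j : n}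
    (h : M i j ≠ 0) : 1 ≤ M i j := by
  obtain ⟨k, hk⟩ := mem_natMatrices_iff.mp hM i j
  rw [hk] at h ⊢
  have hk : 1 ≤ k := Nat.one_le_iff_ne_zero.mpr (by rintro rfl; simp at h)
  exact Nat.cast_one (R := R) ▸ Nat.mono_cast hk

lemma mul_apply_le_mul_apply {M M' N N' : Matrix n n R}
    (hM : M ∈ nonnegMatrices n R) (hN : N ∈ nonnegMatrices n R)
    (hMM' : ∀ i j, M i j ≤ M' i j) (hNN' : ∀ i j, N i j ≤ N' i j) (i j : n) :
    (M * N) i j ≤ (M' * N') i j :=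
  Finset.sum_le_sum fun k _ ↦
    mul_le_mul (hMM' i k) (hNN' k j) (hN k j) ((hM i k).trans (hMM' i k))

lemma one_le_pow_apply_self {M : Matrix n n R} (hM : M ∈ nonnegMatrices n R) {k : n}
    (hk : 1 ≤ M k k) (j : ℕ) : 1 ≤ (M ^ j) k k := by
  induction j with
  | zero => simp
  | succ j ih =>
    have hMj : M ^ j ∈ nonnegMatrices n R := pow_mem hM j
    calc 1 ≤ (M ^ j) k k * M k k := one_le_mul_of_one_le_of_one_le ih hk
      _ ≤ (M ^ (j + 1)) k k := by
        rw [pow_succ, mul_apply]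
        exact Finset.single_le_sum (fun l _ ↦ mul_nonneg (hMj k l) (hM l k)) (Finset.mem_univ k)

end Semiring

lemma map_ofReal_pow (M : Matrix n n ℝ) (k : ℕ) :
    M.map Complex.ofReal ^ k = (M ^ k).map Complex.ofReal :=
  (map_pow Complex.ofRealHom.mapMatrix M k).symm

lemma abs_apply_le_l2_opNorm (M : Matrix n n ℝ) (i j : n) : |M i j| ≤ ‖M‖ := by
  have h := (toEuclideanCLM (𝕜 := ℝ) M).le_opNorm (WithLp.toLp 2 (Pi.single j 1))
  simp only [toEuclideanCLM_toLp, mulVec_single_one] at h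
  rw [cstar_norm_def]
  simpa using (PiLp.norm_apply_le _ i).trans h

lemma l2_opNorm_le_of_abs_le {M N : Matrix n n ℝ} (h : ∀ i j, |M i j| ≤ N i j) :
    ‖M‖ ≤ ‖N‖ := by
  refine (toEuclideanCLM (𝕜 := ℝ) M).opNorm_le_bound (norm_nonneg _) fun x ↦ ?_
  set y : EuclideanSpace ℝ n := WithLp.toLp 2 fun j ↦ |x j|
  have hy : ‖y‖ = ‖x‖ := by simp [y, EuclideanSpace.norm_eq]
  have hN i j : 0 ≤ N i j := (abs_nonneg _).trans (h i j)
  calc ‖toEuclideanCLM (𝕜 := ℝ) M x‖ ≤ ‖toEuclideanCLM (𝕜 := ℝ) N y‖ := by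
        refine (sq_le_sq₀ (norm_nonneg _) (norm_nonneg _)).mp ?_
        simp only [EuclideanSpace.real_norm_sq_eq, ofLp_toEuclideanCLM]
        refine Finset.sum_le_sum fun i _ ↦ sq_le_sq.mpr ?_
        calc |(M *ᵥ WithLp.ofLp x) i| ≤ ∑ j, |M i j| * |x j| := by
              simpa only [mulVec, dotProduct, abs_mul] using
                Finset.abs_sum_le_sum_abs (fun j ↦ M i j * x j) Finset.univ
          _ ≤ ∑ j, N i j * |x j| := by gcongr with j; exact h i j
          _ = |(N *ᵥ WithLp.ofLp y) i| :=
              (abs_of_nonneg <| Finset.sum_nonneg fun j _ ↦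
                mul_nonneg (hN i j) (abs_nonneg _)).symm
    _ ≤ ‖N‖ * ‖x‖ := hy ▸ (toEuclideanCLM (𝕜 := ℝ) N).le_opNorm y

lemma l2_opNorm_map_ofReal (M : Matrix n n ℝ) : ‖M.map Complex.ofReal‖ = ‖M‖ := by
  let re (z : EuclideanSpace ℂ n) : EuclideanSpace ℝ n := WithLp.toLp 2 fun j ↦ (z j).re
  let im (z : EuclideanSpace ℂ n) : EuclideanSpace ℝ n := WithLp.toLp 2 fun j ↦ (z j).im
  have norm_sq (z : EuclideanSpace ℂ n) : ‖z‖ ^ 2 = ‖re z‖ ^ 2 + ‖im z‖ ^ 2 := by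
    simp only [EuclideanSpace.norm_sq_eq, Complex.sq_norm, Complex.normSq_apply,
      ← Finset.sum_add_distrib]
    simp [re, im, sq]
  set T := toEuclideanCLM (𝕜 := ℂ) (M.map Complex.ofReal)
  set S := toEuclideanCLM (𝕜 := ℝ) M
  have hT (x : EuclideanSpace ℂ n) : re (T x) = S (re x) ∧ im (T x) = S (im x) := by
    constructor <;> ext i <;>
      simp [re, im, T, S, mulVec, dotProduct, Complex.re_sum, Complex.im_sum]
  rw [cstar_norm_def, cstar_norm_def]
  apply le_antisymm
  · refine T.opNorm_le_bound (norm_nonneg _) fun x ↦ ?_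
    refine (sq_le_sq₀ (norm_nonneg _) (by positivity)).mp ?_
    rw [mul_pow, norm_sq, norm_sq x, (hT x).1, (hT x).2, mul_add]
    gcongr <;> rw [← mul_pow] <;> gcongr <;> exact S.le_opNorm _
  · refine S.opNorm_le_bound (norm_nonneg _) fun u ↦ ?_
    let x : EuclideanSpace ℂ n := WithLp.toLp 2 fun j ↦ (u j : ℂ)
    have hx : re x = u ∧ im x = 0 := by constructor <;> ext j <;> simp [re, im, x]
    have h := T.le_opNorm x
    rw [← sq_le_sq₀ (norm_nonneg _) (by positivity), mul_pow, norm_sq, norm_sq x, (hT x).1,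
      (hT x).2, hx.1, hx.2] at h
    simpa [← mul_pow, pow_le_pow_iff_left₀, mul_nonneg] using h

end Matrix

section Words

variable {s J : ℕ} (A : Fin J → Matrix (Fin s) (Fin s) ℝ)

@[simp]
lemma wordProd_zero (w : Fin 0 → Fin J) : wordProd A w = 1 := by
  simp [wordProd]

@[simp]
lemma wordProd_one (w : Fin 1 → Fin J) : wordProd A w = A (w 0) := by
  simp [wordProd]

lemma wordProd_succ {n : ℕ} (w : Fin (n + 1) → Fin J) :
    wordProd A w = A (w (Fin.last n)) * wordProd A (fun i ↦ w i.castSucc) := by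
  rw [wordProd, wordProd, List.ofFn_succ', List.concat_eq_append, List.reverse_append]
  simp

lemma wordProd_succ_nat (w : ℕ → Fin J) (n : ℕ) :
    wordProd A (fun i : Fin (n + 1) ↦ w i) = A (w n) * wordProd A (fun i : Fin n ↦ w i) :=
  wordProd_succ A _

lemma wordProd_append {n m : ℕ} (u : Fin n → Fin J) (v : Fin m → Fin J) :
    wordProd A (Fin.append u v) = wordProd A v * wordProd A u := by
  simp [wordProd, List.ofFn_add, Fin.append_right]

lemma wordProd_mem (S : Subsemiring (Matrix (Fin s) (Fin s) ℝ)) (hA : ∀ t, A t ∈ S) {n : ℕ}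
    (w : Fin n → Fin J) : wordProd A w ∈ S :=
  list_prod_mem (by simp [hA])

lemma exists_wordProd_eq_pow {n : ℕ} (w : Fin n → Fin J) (k : ℕ) :
    ∃ u : Fin (k * n) → Fin J, wordProd A u = wordProd A w ^ k := by
  induction k with
  | zero => rw [zero_mul]; exact ⟨Fin.elim0, by simp⟩
  | succ k ih =>
    obtain ⟨u, hu⟩ := ih
    rw [Nat.succ_mul]
    exact ⟨Fin.append u w, by rw [wordProd_append, hu, pow_succ']⟩

end Words

section SpectralRadius

variable {s : ℕ}

lemma tendsto_norm_pow_rpow_specRad (M : Matrix (Fin s) (Fin s) ℝ) :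
    Tendsto (fun k : ℕ ↦ ‖M ^ k‖ ^ (1 / (k : ℝ))) atTop (𝓝 (specRad M)) := by
  set a := M.map Complex.ofReal
  have ha : spectralRadius ℂ a ≠ ⊤ := ne_top_of_le_ne_top (by simp [ENNReal.mul_eq_top])
    (spectrum.spectralRadius_le_pow_nnnorm_pow_one_div ℂ a 0)
  refine ((ENNReal.tendsto_toReal ha).comp
    (spectrum.pow_norm_pow_one_div_tendsto_nhds_spectralRadius a)).congr fun k ↦ ?_
  simp [a, map_ofReal_pow, l2_opNorm_map_ofReal, Real.rpow_nonneg]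

lemma specRad_le_norm_pow_rpow (M : Matrix (Fin s) (Fin s) ℝ) {k : ℕ} (hk : k ≠ 0) :
    specRad M ≤ ‖M ^ k‖ ^ (1 / (k : ℝ)) := by
  have hsub : Tendsto (fun j : ℕ ↦ ‖M ^ (k * j)‖ ^ (1 / ((k * j : ℕ) : ℝ))) atTop
      (𝓝 (specRad M)) :=
    (tendsto_norm_pow_rpow_specRad M).comp
      (tendsto_atTop_mono (fun j ↦ Nat.le_mul_of_pos_left j (Nat.pos_of_ne_zero hk)) tendsto_id)
  refine le_of_tendsto hsub (eventually_atTop.mpr ⟨1, fun j hj ↦ ?_⟩)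
  calc ‖M ^ (k * j)‖ ^ (1 / ((k * j : ℕ) : ℝ))
      ≤ (‖M ^ k‖ ^ j) ^ (1 / ((k * j : ℕ) : ℝ)) := by
        rw [pow_mul]
        exact Real.rpow_le_rpow (norm_nonneg _) (norm_pow_le' _ hj) (by positivity)
    _ = ‖M ^ k‖ ^ (1 / (k : ℝ)) := by
        rw [← Real.rpow_natCast, ← Real.rpow_mul (norm_nonneg _)]
        congr 1
        push_cast
        field_simp

lemma exists_norm_pow_le_mul_pow (M : Matrix (Fin s) (Fin s) ℝ) {r : ℝ} (hr : specRad M < r) :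
    ∃ K > 0, ∀ k, ‖M ^ k‖ ≤ K * r ^ k := by
  have hr₀ : 0 < r := ENNReal.toReal_nonneg.trans_lt hr
  have hev : ∀ᶠ k : ℕ in atTop, ‖M ^ k‖ / r ^ k ≤ 1 := by
    filter_upwards [(tendsto_norm_pow_rpow_specRad M).eventually_lt_const hr,
      eventually_ge_atTop 1] with k hk hk₁
    rw [one_div, Real.rpow_inv_lt_iff_of_pos (norm_nonneg _) hr₀.le (by positivity),
      Real.rpow_natCast] at hk
    exact (div_le_one (by positivity)).mpr hk.le
  obtain ⟨C, hC⟩ := (isBoundedUnder_of_eventually_le hev).bddAbove_range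
  refine ⟨max C 1, by positivity, fun k ↦ ?_⟩
  rw [← div_le_iff₀ (by positivity)]
  exact (hC (Set.mem_range_self k)).trans (le_max_left C 1)

lemma one_le_specRad_of_one_le_apply_self {M : Matrix (Fin s) (Fin s) ℝ}
    (hM : M ∈ nonnegMatrices (Fin s) ℝ) {k : Fin s} (hk : 1 ≤ M k k) : 1 ≤ specRad M := by
  refine ge_of_tendsto (tendsto_norm_pow_rpow_specRad M) (Eventually.of_forall fun j ↦ ?_)
  refine Real.one_le_rpow ?_ (by positivity)
  calc 1 ≤ (M ^ j) k k := one_le_pow_apply_self hM hk j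
    _ ≤ |(M ^ j) k k| := le_abs_self _
    _ ≤ ‖M ^ j‖ := abs_apply_le_l2_opNorm _ k k

end SpectralRadius

section JointSpectralRadius

variable {s J : ℕ} (A : Fin J → Matrix (Fin s) (Fin s) ℝ)

lemma l2OpNorm_eq_norm (M : Matrix (Fin s) (Fin s) ℝ) : l2OpNorm M = ‖M‖ := rfl

noncomputable def maxWordNorm (n : ℕ) : ℝ :=
  ⨆ w : Fin n → Fin J, ‖wordProd A w‖

variable {A}

lemma norm_wordProd_le_maxWordNorm {n : ℕ} (w : Fin n → Fin J) :
    ‖wordProd A w‖ ≤ maxWordNorm A n :=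
  le_ciSup (f := fun w : Fin n → Fin J ↦ ‖wordProd A w‖) (Set.finite_range _).bddAbove w

lemma maxWordNorm_nonneg (n : ℕ) : 0 ≤ maxWordNorm A n :=
  Real.iSup_nonneg fun _ ↦ norm_nonneg _

lemma maxWordNorm_add_le (n m : ℕ) :
    maxWordNorm A (n + m) ≤ maxWordNorm A n * maxWordNorm A m := by
  refine Real.iSup_le (fun w ↦ ?_) (mul_nonneg (maxWordNorm_nonneg n) (maxWordNorm_nonneg m))
  rw [← Fin.append_castAdd_natAdd (f := w), wordProd_append, mul_comm (maxWordNorm A n)]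
  exact (norm_mul_le _ _).trans (mul_le_mul (norm_wordProd_le_maxWordNorm _)
    (norm_wordProd_le_maxWordNorm _) (norm_nonneg _) (maxWordNorm_nonneg m))

lemma maxWordNorm_mul_le_pow {k : ℕ} (hk : k ≠ 0) (n : ℕ) :
    maxWordNorm A (k * n) ≤ maxWordNorm A n ^ k := by
  induction k, Nat.one_le_iff_ne_zero.mpr hk using Nat.le_induction with
  | base => simp
  | succ k _ ih =>
    rw [Nat.succ_mul, pow_succ]
    exact (maxWordNorm_add_le _ _).trans
      (mul_le_mul_of_nonneg_right (ih (by omega)) (maxWordNorm_nonneg n))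

lemma iSup_norm_wordProd_rpow {n : ℕ} (hn : n ≠ 0) :
    ⨆ w : Fin n → Fin J, ‖wordProd A w‖ ^ (1 / (n : ℝ)) =
      maxWordNorm A n ^ (1 / (n : ℝ)) := by
  rcases isEmpty_or_nonempty (Fin n → Fin J) with hw | hw
  · simp [maxWordNorm, hn]
  · obtain ⟨w₀, hw₀⟩ := Finite.exists_max fun w : Fin n → Fin J ↦ ‖wordProd A w‖
    have hmax : maxWordNorm A n = ‖wordProd A w₀‖ :=
      le_antisymm (ciSup_le hw₀) (norm_wordProd_le_maxWordNorm w₀)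
    rw [hmax]
    refine le_antisymm (ciSup_le fun w ↦ ?_) (le_ciSup (Set.finite_range
      fun w : Fin n → Fin J ↦ ‖wordProd A w‖ ^ (1 / (n : ℝ))).bddAbove w₀)
    exact Real.rpow_le_rpow (norm_nonneg _) (hw₀ w) (by positivity)

lemma JSR_eq_iInf_maxWordNorm :
    JSR A = ⨅ n : {m : ℕ // 1 ≤ m}, maxWordNorm A n ^ (1 / (n : ℝ)) := by
  simp only [JSR, l2OpNorm_eq_norm]
  exact iInf_congr fun n ↦ iSup_norm_wordProd_rpow (by have := n.2; omega)

lemma JSR_le_maxWordNorm_rpow {n : ℕ} (hn : n ≠ 0) :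
    JSR A ≤ maxWordNorm A n ^ (1 / (n : ℝ)) := by
  rw [JSR_eq_iInf_maxWordNorm]
  exact ciInf_le ⟨0, Set.forall_mem_range.mpr fun m ↦
    Real.rpow_nonneg (maxWordNorm_nonneg _) _⟩
    (⟨n, Nat.one_le_iff_ne_zero.mpr hn⟩ : {m : ℕ // 1 ≤ m})

lemma le_JSR {c : ℝ} (h : ∀ n ≠ 0, c ≤ maxWordNorm A n ^ (1 / (n : ℝ))) :
    c ≤ JSR A := by
  rw [JSR_eq_iInf_maxWordNorm]
  exact le_ciInf fun n ↦ h n (by have := n.2; omega)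

lemma specRad_wordProd_rpow_le_JSR {n : ℕ} (hn : n ≠ 0) (w : Fin n → Fin J) :
    specRad (wordProd A w) ^ (1 / (n : ℝ)) ≤ JSR A := by
  refine le_JSR fun m hm ↦ ?_
  obtain ⟨u, hu⟩ := exists_wordProd_eq_pow A w m
  -- `W ^ m` is a word of length `n * m`, i.e. a product of `n` words of length `m`.
  have hpow : ‖wordProd A w ^ m‖ ≤ maxWordNorm A m ^ n := by
    rw [← hu]
    exact (norm_wordProd_le_maxWordNorm u).trans (mul_comm m n ▸ maxWordNorm_mul_le_pow hn m)
  have hspec : specRad (wordProd A w) ≤ (maxWordNorm A m ^ n) ^ (1 / (m : ℝ)) :=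
    (specRad_le_norm_pow_rpow _ hm).trans
      (Real.rpow_le_rpow (norm_nonneg _) hpow (by positivity))
  calc specRad (wordProd A w) ^ (1 / (n : ℝ))
      ≤ ((maxWordNorm A m ^ n) ^ (1 / (m : ℝ))) ^ (1 / (n : ℝ)) :=
        Real.rpow_le_rpow ENNReal.toReal_nonneg hspec (by positivity)
    _ = maxWordNorm A m ^ (1 / (m : ℝ)) := by
        rw [← Real.rpow_natCast, ← Real.rpow_mul (maxWordNorm_nonneg m),
          ← Real.rpow_mul (maxWordNorm_nonneg m)]
        congr 1
        field_simp

lemma exists_wordProd_ne_zero_of_JSR_pos (h : 0 < JSR A) {n : ℕ} (hn : n ≠ 0) :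
    ∃ w : Fin n → Fin J, wordProd A w ≠ 0 := by
  by_contra! hw
  have hmax : maxWordNorm A n = 0 :=
    le_antisymm (Real.iSup_le (fun w ↦ by simp [hw w]) le_rfl) (maxWordNorm_nonneg n)
  have := JSR_le_maxWordNorm_rpow (A := A) hn
  rw [hmax, Real.zero_rpow (by positivity)] at this
  linarith

lemma JSR_le_of_maxWordNorm_le {K r : ℝ} (hK : 0 < K) (hr : 0 ≤ r)
    (h : ∀ n ≠ 0, maxWordNorm A n ≤ K * r ^ n) : JSR A ≤ r := by
  have hlim : Tendsto (fun n : ℕ ↦ K ^ (1 / (n : ℝ)) * r) atTop (𝓝 r) := by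
    simpa using (tendsto_const_nhds.rpow tendsto_one_div_atTop_nhds_zero_nat
      (Or.inl hK.ne')).mul_const r
  refine ge_of_tendsto hlim (eventually_atTop.mpr ⟨1, fun n hn ↦ ?_⟩)
  calc JSR A ≤ maxWordNorm A n ^ (1 / (n : ℝ)) := JSR_le_maxWordNorm_rpow (by omega)
    _ ≤ (K * r ^ n) ^ (1 / (n : ℝ)) :=
        Real.rpow_le_rpow (maxWordNorm_nonneg n) (h n (by omega)) (by positivity)
    _ = K ^ (1 / (n : ℝ)) * r := by
        rw [Real.mul_rpow hK.le (by positivity), ← Real.rpow_natCast, ← Real.rpow_mul hr,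
          mul_one_div_cancel (by positivity), Real.rpow_one]

end JointSpectralRadius

lemma finitenessProperty_of_JSR_le {s : ℕ} {A : Fin 2 → Matrix (Fin s) (Fin s) ℝ} {n : ℕ}
    (hn : n ≠ 0) (w : Fin n → Fin 2) (h : JSR A ≤ specRad (wordProd A w) ^ (1 / (n : ℝ))) :
    FinitenessProperty A :=
  ⟨n, Nat.one_le_iff_ne_zero.mpr hn, w, le_antisymm (specRad_wordProd_rpow_le_JSR hn w) h⟩

section Paths

variable {s J : ℕ} {A : Fin J → Matrix (Fin s) (Fin s) ℝ}

lemma exists_path_of_wordProd_apply_ne_zero (w : ℕ → Fin J) {n : ℕ} {i j : Fin s}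
    (h : wordProd A (fun t : Fin n ↦ w t) i j ≠ 0) :
    ∃ p : ℕ → Fin s, p n = i ∧ ∀ t < n, A (w t) (p (t + 1)) (p t) ≠ 0 := by
  induction n generalizing i with
  | zero => exact ⟨fun _ ↦ i, rfl, by simp⟩
  | succ n ih =>
    rw [wordProd_succ_nat, mul_apply] at h
    obtain ⟨k, -, hk⟩ := Finset.exists_ne_zero_of_sum_ne_zero h
    obtain ⟨p, hpn, hp⟩ := ih (right_ne_zero_of_mul hk)
    refine ⟨Function.update p (n + 1) i, by simp, fun t ht ↦ ?_⟩
    rcases Nat.lt_succ_iff_lt_or_eq.mp ht with ht | rfl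
    · simpa [Function.update_of_ne (show t + 1 ≠ n + 1 by omega),
        Function.update_of_ne (show t ≠ n + 1 by omega)] using hp t ht
    · simpa [hpn] using left_ne_zero_of_mul hk

lemma wordProd_apply_ne_zero_of_path (hA : ∀ t, A t ∈ nonnegMatrices (Fin s) ℝ)
    (w : ℕ → Fin J) (p : ℕ → Fin s) {n : ℕ}
    (hp : ∀ t < n, A (w t) (p (t + 1)) (p t) ≠ 0) :
    wordProd A (fun t : Fin n ↦ w t) (p n) (p 0) ≠ 0 := by
  induction n with
  | zero => simp
  | succ n ih =>
    rw [wordProd_succ_nat, mul_apply]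
    have hnonneg : ∀ k ∈ Finset.univ, 0 ≤ A (w n) (p (n + 1)) k *
        wordProd A (fun t : Fin n ↦ w t) k (p 0) := fun k _ ↦
      mul_nonneg (hA _ _ _) (wordProd_mem A _ hA _ _ _)
    refine (Finset.sum_pos' hnonneg ⟨p n, Finset.mem_univ _, mul_pos ?_ ?_⟩).ne'
    · exact (hA _ _ _).lt_of_ne' (hp n n.lt_succ_self)
    · exact (wordProd_mem A _ hA _ _ _).lt_of_ne' (ih fun t ht ↦ hp t (by omega))

lemma exists_wordProd_apply_self_ne_zero (hA : ∀ t, A t ∈ nonnegMatrices (Fin s) ℝ)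
    {n : ℕ} (hn : s ≤ n) (w : Fin n → Fin J) (hw : wordProd A w ≠ 0) :
    ∃ m ≠ 0, ∃ (v : Fin m → Fin J) (k : Fin s), wordProd A v k k ≠ 0 := by
  obtain ⟨i, j, hij⟩ : ∃ i j, wordProd A w i j ≠ 0 := by
    by_contra! h
    exact hw (ext h)
  have hn₀ : 0 < n := (Fin.pos i).trans_le hn
  set w' : ℕ → Fin J := fun t ↦ w ⟨t % n, Nat.mod_lt t hn₀⟩
  have hw' : (fun t : Fin n ↦ w' t) = w := funext fun t ↦ by simp [w', Nat.mod_eq_of_lt t.isLt]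
  obtain ⟨p, -, hp⟩ := exists_path_of_wordProd_apply_ne_zero w' (hw' ▸ hij)
  obtain ⟨x, hx, y, hy, hxy, hpxy⟩ := Finset.exists_ne_map_eq_of_card_lt_of_maps_to
    (s := Finset.range (n + 1)) (t := Finset.univ) (by simpa using Nat.lt_succ_of_le hn) (f := p) (by simp)
  wlog hlt : x < y generalizing x y
  · exact this y hy x hx hxy.symm hpxy.symm (by omega)
  rw [Finset.mem_range] at hy
  have hcycle := wordProd_apply_ne_zero_of_path hA (fun t ↦ w' (x + t)) (fun t ↦ p (x + t))
    (n := y - x) fun t ht ↦ by simpa [add_assoc] using hp (x + t) (by omega)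
  refine ⟨y - x, by omega, fun t ↦ w' (x + t), p x, ?_⟩
  simpa [Nat.add_sub_cancel' hlt.le, hpxy] using hcycle

end Paths

section DominatedPair

variable {s : ℕ} {A₁ A₂ : Matrix (Fin s) (Fin s) ℝ}
  (hA : ∀ t, ![A₁, A₂] t ∈ nonnegMatrices (Fin s) ℝ)
  (hle : ∀ i j, A₂ i j ≤ (1 : Matrix (Fin s) (Fin s) ℝ) i j)
include hA hle

lemma exists_wordProd_le_pow {m : ℕ} (w : Fin m → Fin 2) :
    ∃ c ≤ m, ∀ i j, wordProd ![A₁, A₂] w i j ≤ (A₁ ^ c) i j := by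
  induction m with
  | zero => exact ⟨0, le_rfl, by simp⟩
  | succ m ih =>
    obtain ⟨c, hcm, hc⟩ := ih fun t ↦ w t.castSucc
    have hW := wordProd_mem _ _ hA fun t ↦ w t.castSucc
    rw [wordProd_succ]
    obtain h | h : w (Fin.last m) = 0 ∨ w (Fin.last m) = 1 := by omega
    all_goals rw [h]
    · refine ⟨c + 1, by omega, fun i j ↦ ?_⟩
      rw [pow_succ']
      exact mul_apply_le_mul_apply (hA 0) hW (fun _ _ ↦ le_rfl) hc i j
    · refine ⟨c, by omega, fun i j ↦ ?_⟩
      simpa using mul_apply_le_mul_apply (hA 1) hW hle hc i j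

lemma JSR_le_max_one_specRad : JSR ![A₁, A₂] ≤ max 1 (specRad A₁) := by
  refine le_of_forall_gt_imp_ge_of_dense fun r hr ↦ ?_
  have hr₁ : 1 ≤ r := (le_max_left _ _).trans hr.le
  obtain ⟨K, hK, hKr⟩ := exists_norm_pow_le_mul_pow A₁ ((le_max_right _ _).trans_lt hr)
  refine JSR_le_of_maxWordNorm_le hK (by linarith) fun m _ ↦
    Real.iSup_le (fun w ↦ ?_) (by positivity)
  obtain ⟨c, hcm, hc⟩ := exists_wordProd_le_pow hA hle w
  have hW := wordProd_mem _ _ hA w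
  calc ‖wordProd ![A₁, A₂] w‖ ≤ ‖A₁ ^ c‖ :=
        l2_opNorm_le_of_abs_le fun i j ↦ (abs_of_nonneg (hW i j)).trans_le (hc i j)
    _ ≤ K * r ^ c := hKr c
    _ ≤ K * r ^ m := by gcongr

end DominatedPair

/-- If `A₂ ≤ I` entrywise for nonnegative-integer matrices then the pair has
the finiteness property. -/
theorem finiteness_property_of_le_one {s : ℕ}
    (A₁ A₂ : Matrix (Fin s) (Fin s) ℝ)
    (h₁ : ∀ i j, ∃ k : ℕ, A₁ i j = k)
    (h₂ : ∀ i j, ∃ k : ℕ, A₂ i j = k)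
    (hle : ∀ i j, A₂ i j ≤ (1 : Matrix (Fin s) (Fin s) ℝ) i j) :
    FinitenessProperty ![A₁, A₂] := by
  have hnat : ∀ t, ![A₁, A₂] t ∈ natMatrices (Fin s) ℝ :=
    Fin.forall_fin_two.mpr ⟨mem_natMatrices_iff.mpr h₁, mem_natMatrices_iff.mpr h₂⟩
  have hnonneg t := natMatrices_le_nonnegMatrices (hnat t)
  rcases le_or_gt (JSR ![A₁, A₂]) (specRad A₁) with hA₁ | hA₁
  · exact finitenessProperty_of_JSR_le one_ne_zero ![0] (by simpa using hA₁)
  have hJSR : JSR ![A₁, A₂] ≤ 1 :=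
    (le_max_iff.mp (JSR_le_max_one_specRad hnonneg hle)).resolve_right hA₁.not_ge
  obtain ⟨w, hw⟩ :=
    exists_wordProd_ne_zero_of_JSR_pos (ENNReal.toReal_nonneg.trans_lt hA₁) s.succ_ne_zero
  obtain ⟨m, hm, v, k, hv⟩ := exists_wordProd_apply_self_ne_zero hnonneg s.le_succ w hw
  refine finitenessProperty_of_JSR_le hm v (hJSR.trans (Real.one_le_rpow ?_ (by positivity)))
  exact one_le_specRad_of_one_le_apply_self (wordProd_mem _ _ hnonneg v)
    (one_le_of_mem_natMatrices (wordProd_mem _ _ hnat v) hv)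
end

section
/- Let A₁, A₂ be real s×s matrices all of whose entries are nonnegative integers. If A₂·A₁ ≤ A₁·A₂ entrywise, then JSR(A₁, A₂) = max(ρ(A₁), ρ(A₂)); in particular the pair (A₁, A₂) has the finiteness property. -/
set_option synthInstance.maxHeartbeats 1000000
set_option maxHeartbeats 1000000


open Matrix

/-! ### Auxiliary lemmas -/

lemma l2OpNorm_nonneg {s : ℕ} (A : Matrix (Fin s) (Fin s) ℝ) : 0 ≤ l2OpNorm A :=
  norm_nonneg _

/-- The star-algebra equivalence `toEuclideanCLM` repackaged as an `AlgEquiv`. -/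
noncomputable def matCLM (s : ℕ) :
    Matrix (Fin s) (Fin s) ℂ ≃ₐ[ℂ] (EuclideanSpace ℂ (Fin s) →L[ℂ] EuclideanSpace ℂ (Fin s)) :=
  { Matrix.toEuclideanCLM (𝕜 := ℂ) with
    commutes' := fun z => by
      show Matrix.toEuclideanCLM (𝕜 := ℂ) (algebraMap ℂ _ z) = algebraMap ℂ _ z
      rw [Algebra.algebraMap_eq_smul_one, Algebra.algebraMap_eq_smul_one,
        _root_.map_smul, _root_.map_one] }

/-- The complex CLM attached to a real matrix. -/
noncomputable def cT {s : ℕ} (A : Matrix (Fin s) (Fin s) ℝ) :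
    EuclideanSpace ℂ (Fin s) →L[ℂ] EuclideanSpace ℂ (Fin s) :=
  Matrix.toEuclideanCLM (𝕜 := ℂ) (A.map (Complex.ofReal : ℝ → ℂ))

lemma cT_pow {s : ℕ} (A : Matrix (Fin s) (Fin s) ℝ) (n : ℕ) :
    cT (A ^ n) = (cT A) ^ n := by
  unfold cT
  rw [show (A ^ n).map (Complex.ofReal : ℝ → ℂ)
      = (Complex.ofRealHom.mapMatrix : Matrix (Fin s) (Fin s) ℝ →+* Matrix (Fin s) (Fin s) ℂ)
        (A ^ n) from rfl,
    map_pow, _root_.map_pow]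
  rfl

lemma specRad_eq {s : ℕ} (A : Matrix (Fin s) (Fin s) ℝ) :
    specRad A = (spectralRadius ℂ (cT A)).toReal := by
  unfold specRad cT
  congr 1
  unfold spectralRadius
  rw [show spectrum ℂ (Matrix.toEuclideanCLM (𝕜 := ℂ) (A.map Complex.ofReal))
    = spectrum ℂ (A.map Complex.ofReal) from
    AlgEquiv.spectrum_eq (matCLM s) (A.map Complex.ofReal)]

lemma specRad_nonneg {s : ℕ} (A : Matrix (Fin s) (Fin s) ℝ) : 0 ≤ specRad A :=
  ENNReal.toReal_nonneg

lemma specRad_ne_top {s : ℕ} (A : Matrix (Fin s) (Fin s) ℝ) :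
    spectralRadius ℂ (cT A) ≠ ⊤ := by
  have h := spectrum.spectralRadius_le_pow_nnnorm_pow_one_div ℂ (cT A) 0
  refine ne_top_of_le_ne_top (ENNReal.mul_ne_top ?_ ?_) h <;>
    exact (ENNReal.rpow_lt_top_of_nonneg (by positivity) ENNReal.coe_ne_top).ne

/-- Complex operator norm of an entrywise-nonneg matrix is dominated by the real operator
norm of any entrywise-larger matrix. -/
lemma clm_norm_le {s : ℕ} {A B : Matrix (Fin s) (Fin s) ℝ} (hA : ∀ i j, 0 ≤ A i j)
    (hAB : ∀ i j, A i j ≤ B i j) :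
    ‖Matrix.toEuclideanCLM (𝕜 := ℂ) (A.map Complex.ofReal)‖ ≤ l2OpNorm B := by
  apply ContinuousLinearMap.opNorm_le_bound _ (norm_nonneg _)
  intro x
  set xa : EuclideanSpace ℝ (Fin s) := (WithLp.equiv 2 _).symm (fun j => ‖x j‖) with hxadef
  have hxai : ∀ i, xa i = ‖x i‖ := fun i => rfl
  have hxa : ‖xa‖ = ‖x‖ := by
    rw [EuclideanSpace.norm_eq, EuclideanSpace.norm_eq]
    congr 1
    refine Finset.sum_congr rfl fun i _ => ?_
    rw [hxai, norm_norm]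
  have key : ∀ i, ‖(Matrix.toEuclideanCLM (𝕜 := ℂ) (A.map Complex.ofReal) x) i‖
      ≤ (Matrix.toEuclideanCLM (𝕜 := ℝ) B xa) i := by
    intro i
    show ‖(A.map Complex.ofReal).mulVec x i‖ ≤ B.mulVec xa i
    unfold Matrix.mulVec dotProduct
    refine (norm_sum_le _ _).trans ?_
    refine Finset.sum_le_sum fun j _ => ?_
    simp only []
    rw [show (A.map Complex.ofReal) i j = ((A i j : ℝ) : ℂ) from rfl, norm_mul,
      Complex.norm_real, Real.norm_of_nonneg (hA i j), hxai]
    exact mul_le_mul_of_nonneg_right (hAB i j) (norm_nonneg _)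
  have hBnn : ∀ i, 0 ≤ (Matrix.toEuclideanCLM (𝕜 := ℝ) B xa) i :=
    fun i => le_trans (norm_nonneg _) (key i)
  calc ‖Matrix.toEuclideanCLM (𝕜 := ℂ) (A.map Complex.ofReal) x‖
      ≤ ‖Matrix.toEuclideanCLM (𝕜 := ℝ) B xa‖ := by
        rw [EuclideanSpace.norm_eq, EuclideanSpace.norm_eq]
        apply Real.sqrt_le_sqrt
        refine Finset.sum_le_sum fun i _ => ?_
        rw [Real.norm_of_nonneg (hBnn i)]
        exact pow_le_pow_left₀ (norm_nonneg _) (key i) 2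
    _ ≤ l2OpNorm B * ‖xa‖ := (Matrix.toEuclideanCLM (𝕜 := ℝ) B).le_opNorm xa
    _ = l2OpNorm B * ‖x‖ := by rw [hxa]

lemma real_norm_le_clm_norm {s : ℕ} (A : Matrix (Fin s) (Fin s) ℝ) :
    l2OpNorm A ≤ ‖Matrix.toEuclideanCLM (𝕜 := ℂ) (A.map Complex.ofReal)‖ := by
  apply ContinuousLinearMap.opNorm_le_bound _ (norm_nonneg _)
  intro x
  set xc : EuclideanSpace ℂ (Fin s) := (WithLp.equiv 2 _).symm (fun j => (x j : ℂ)) with hxcdef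
  have hxci : ∀ i, xc i = (x i : ℂ) := fun i => rfl
  have hxc : ‖xc‖ = ‖x‖ := by
    rw [EuclideanSpace.norm_eq, EuclideanSpace.norm_eq]
    congr 1
    refine Finset.sum_congr rfl fun i _ => ?_
    rw [hxci, Complex.norm_real]
  have key : ∀ i, (Matrix.toEuclideanCLM (𝕜 := ℂ) (A.map Complex.ofReal) xc) i
      = ((Matrix.toEuclideanCLM (𝕜 := ℝ) A x) i : ℂ) := by
    intro i
    show (A.map Complex.ofReal).mulVec xc i = ((A.mulVec x i : ℝ) : ℂ)
    unfold Matrix.mulVec dotProduct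
    push_cast
    refine Finset.sum_congr rfl fun j _ => ?_
    rw [show (A.map Complex.ofReal) i j = ((A i j : ℝ) : ℂ) from rfl, hxci]
  calc ‖Matrix.toEuclideanCLM (𝕜 := ℝ) A x‖
      = ‖Matrix.toEuclideanCLM (𝕜 := ℂ) (A.map Complex.ofReal) xc‖ := by
        rw [EuclideanSpace.norm_eq, EuclideanSpace.norm_eq]
        congr 1
        refine Finset.sum_congr rfl fun i _ => ?_
        rw [key i, Complex.norm_real]
    _ ≤ ‖Matrix.toEuclideanCLM (𝕜 := ℂ) (A.map Complex.ofReal)‖ * ‖xc‖ :=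
        (Matrix.toEuclideanCLM (𝕜 := ℂ) (A.map Complex.ofReal)).le_opNorm xc
    _ = _ := by rw [hxc]

lemma l2OpNorm_mul_le {s : ℕ} (A B : Matrix (Fin s) (Fin s) ℝ) :
    l2OpNorm (A * B) ≤ l2OpNorm A * l2OpNorm B := by
  unfold l2OpNorm
  rw [_root_.map_mul]
  exact norm_mul_le _ _

lemma specRad_le_pow {s : ℕ} (A : Matrix (Fin s) (Fin s) ℝ) {n : ℕ} (hn : 1 ≤ n) :
    specRad A ≤ ‖(cT A) ^ n‖ ^ (1 / (n : ℝ)) := by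
  obtain ⟨m, rfl⟩ : ∃ m, n = m + 1 := ⟨n - 1, by omega⟩
  have h := spectrum.spectralRadius_le_pow_nnnorm_pow_one_div ℂ (cT A) m
  have h1 : (‖(1 : EuclideanSpace ℂ (Fin s) →L[ℂ] EuclideanSpace ℂ (Fin s))‖₊ : ENNReal)
      ^ (1 / (m + 1 : ℝ)) ≤ 1 := by
    have hid : ‖(1 : EuclideanSpace ℂ (Fin s) →L[ℂ] EuclideanSpace ℂ (Fin s))‖ ≤ 1 :=
      ContinuousLinearMap.norm_id_le
    calc (‖(1 : EuclideanSpace ℂ (Fin s) →L[ℂ] EuclideanSpace ℂ (Fin s))‖₊ : ENNReal)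
          ^ (1 / (m + 1 : ℝ))
        ≤ (1 : ENNReal) ^ (1 / (m + 1 : ℝ)) :=
          ENNReal.rpow_le_rpow (by exact_mod_cast hid) (by positivity)
      _ = 1 := ENNReal.one_rpow _
  have h2 : spectralRadius ℂ (cT A)
      ≤ (‖(cT A) ^ (m + 1)‖₊ : ENNReal) ^ (1 / ((m + 1 : ℕ) : ℝ)) := by
    refine h.trans ?_
    push_cast
    calc _ ≤ (‖(cT A) ^ (m + 1)‖₊ : ENNReal) ^ (1 / (m + 1 : ℝ)) * 1 :=
          mul_le_mul_right h1 _
      _ = _ := by rw [mul_one]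
  have h3 := ENNReal.toReal_mono ?_ h2
  · rw [specRad_eq]
    refine h3.trans ?_
    rw [← ENNReal.toReal_rpow]
    simp
  · exact (ENNReal.rpow_lt_top_of_nonneg (by positivity) ENNReal.coe_ne_top).ne

lemma exists_pow_bound {s : ℕ} (A : Matrix (Fin s) (Fin s) ℝ) {t : ℝ}
    (ht : specRad A < t) :
    ∃ C : ℝ, 1 ≤ C ∧ ∀ n : ℕ, l2OpNorm (A ^ n) ≤ C * t ^ n := by
  have ht0 : 0 < t := (specRad_nonneg A).trans_lt ht
  have hlt : spectralRadius ℂ (cT A) < ENNReal.ofReal t := by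
    rw [← ENNReal.ofReal_toReal (specRad_ne_top A), ← specRad_eq]
    exact (ENNReal.ofReal_lt_ofReal_iff ht0).mpr ht
  have hgel := spectrum.pow_nnnorm_pow_one_div_tendsto_nhds_spectralRadius (cT A)
  obtain ⟨N, hN⟩ := Filter.eventually_atTop.mp (hgel.eventually_lt_const hlt)
  have hbound : ∀ n, N ≤ n → 1 ≤ n → l2OpNorm (A ^ n) ≤ t ^ n := by
    intro n hNn h1n
    have hn0 : ((n : ℝ)) ≠ 0 := by positivity
    have h2 := ENNReal.rpow_le_rpow (hN n hNn).le (by positivity : (0:ℝ) ≤ (n:ℝ))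
    rw [← ENNReal.rpow_mul, one_div, inv_mul_cancel₀ hn0, ENNReal.rpow_one,
      ENNReal.rpow_natCast] at h2
    have h3 := ENNReal.toReal_mono (ENNReal.pow_ne_top ENNReal.ofReal_ne_top) h2
    rw [ENNReal.toReal_pow, ENNReal.toReal_ofReal ht0.le, ENNReal.coe_toReal,
      coe_nnnorm] at h3
    calc l2OpNorm (A ^ n) ≤ ‖(cT A) ^ n‖ := by
          rw [← cT_pow]; exact real_norm_le_clm_norm _
      _ ≤ t ^ n := h3
  set N' := max N 1 with hN'
  set S := ∑ k ∈ Finset.range N', l2OpNorm (A ^ k) / t ^ k with hS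
  have hS0 : 0 ≤ S := Finset.sum_nonneg fun k _ => div_nonneg (l2OpNorm_nonneg _) (by positivity)
  refine ⟨1 + S, by linarith, fun n => ?_⟩
  by_cases hn : N' ≤ n
  · calc l2OpNorm (A ^ n) ≤ t ^ n :=
          hbound n (le_trans (le_max_left _ _) hn) (le_trans (le_max_right _ _) hn)
      _ = 1 * t ^ n := (one_mul _).symm
      _ ≤ (1 + S) * t ^ n := by
          exact mul_le_mul_of_nonneg_right (by linarith) (by positivity)
  · push_neg at hn
    have hterm : l2OpNorm (A ^ n) / t ^ n ≤ S :=
      Finset.single_le_sum (f := fun k => l2OpNorm (A ^ k) / t ^ k)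
        (fun k _ => div_nonneg (l2OpNorm_nonneg _) (by positivity)) (Finset.mem_range.mpr hn)
    have heq : l2OpNorm (A ^ n) = (l2OpNorm (A ^ n) / t ^ n) * t ^ n := by
      field_simp
    rw [heq]
    exact mul_le_mul_of_nonneg_right (by linarith) (by positivity)

section Entrywise
variable {s : ℕ} {M N P Q : Matrix (Fin s) (Fin s) ℝ}

lemma entry_mul_nonneg (hM : ∀ i j, 0 ≤ M i j) (hN : ∀ i j, 0 ≤ N i j) :
    ∀ i j, 0 ≤ (M * N) i j := by
  intro i j
  rw [Matrix.mul_apply]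
  exact Finset.sum_nonneg fun k _ => mul_nonneg (hM i k) (hN k j)

lemma entry_pow_nonneg (hM : ∀ i j, 0 ≤ M i j) (n : ℕ) :
    ∀ i j, 0 ≤ (M ^ n) i j := by
  induction n with
  | zero => intro i j; rw [pow_zero, Matrix.one_apply]; split <;> norm_num
  | succ n ih => rw [pow_succ]; exact entry_mul_nonneg ih hM

lemma entry_mul_le_mul_left (hM : ∀ i j, 0 ≤ M i j) (h : ∀ i j, N i j ≤ P i j) :
    ∀ i j, (M * N) i j ≤ (M * P) i j := by
  intro i j
  rw [Matrix.mul_apply, Matrix.mul_apply]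
  exact Finset.sum_le_sum fun k _ => mul_le_mul_of_nonneg_left (h k j) (hM i k)

lemma entry_mul_le_mul_right (hM : ∀ i j, 0 ≤ M i j) (h : ∀ i j, N i j ≤ P i j) :
    ∀ i j, (N * M) i j ≤ (P * M) i j := by
  intro i j
  rw [Matrix.mul_apply, Matrix.mul_apply]
  exact Finset.sum_le_sum fun k _ => mul_le_mul_of_nonneg_right (h i k) (hM k j)

end Entrywise

section Sorting
variable {s : ℕ} {A₁ A₂ : Matrix (Fin s) (Fin s) ℝ}

lemma semicommute_pow (h1 : ∀ i j, 0 ≤ A₁ i j)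
    (hle : ∀ i j, (A₂ * A₁) i j ≤ (A₁ * A₂) i j) (k : ℕ) :
    ∀ i j, (A₂ * A₁ ^ k) i j ≤ (A₁ ^ k * A₂) i j := by
  induction k with
  | zero => intro i j; rw [pow_zero, mul_one, one_mul]
  | succ k ih =>
    intro i j
    have e1 : A₂ * A₁ ^ (k + 1) = (A₂ * A₁ ^ k) * A₁ := by rw [pow_succ, mul_assoc]
    have e2 : (A₁ ^ k * A₂) * A₁ = A₁ ^ k * (A₂ * A₁) := by rw [mul_assoc]
    have e3 : A₁ ^ k * (A₁ * A₂) = A₁ ^ (k + 1) * A₂ := by rw [← mul_assoc, ← pow_succ]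
    rw [e1]
    calc ((A₂ * A₁ ^ k) * A₁) i j ≤ ((A₁ ^ k * A₂) * A₁) i j :=
          entry_mul_le_mul_right h1 ih i j
      _ = (A₁ ^ k * (A₂ * A₁)) i j := by rw [e2]
      _ ≤ (A₁ ^ k * (A₁ * A₂)) i j :=
          entry_mul_le_mul_left (entry_pow_nonneg h1 k) hle i j
      _ = (A₁ ^ (k + 1) * A₂) i j := by rw [e3]

lemma list_prod_nonneg (h1 : ∀ i j, 0 ≤ A₁ i j) (h2 : ∀ i j, 0 ≤ A₂ i j) :
    ∀ l : List (Fin 2), ∀ i j, 0 ≤ ((l.map (![A₁, A₂] ·)).prod) i j := by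
  intro l
  induction l with
  | nil => intro i j; simp only [List.map_nil, List.prod_nil, Matrix.one_apply]
           split <;> norm_num
  | cons a tl ih =>
    rw [List.map_cons, List.prod_cons]
    refine entry_mul_nonneg ?_ ih
    fin_cases a
    · simpa using h1
    · simpa using h2

lemma list_prod_le_sorted (h1 : ∀ i j, 0 ≤ A₁ i j) (h2 : ∀ i j, 0 ≤ A₂ i j)
    (hle : ∀ i j, (A₂ * A₁) i j ≤ (A₁ * A₂) i j) :
    ∀ l : List (Fin 2), ∃ k m : ℕ, k + m = l.length ∧
      ∀ i j, ((l.map (![A₁, A₂] ·)).prod) i j ≤ (A₁ ^ k * A₂ ^ m) i j := by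
  intro l
  induction l with
  | nil =>
    exact ⟨0, 0, rfl, by simp⟩
  | cons a tl ih =>
    obtain ⟨k, m, hkm, hb⟩ := ih
    rw [List.map_cons, List.prod_cons]
    fin_cases a
    · refine ⟨k + 1, m, by simp [← hkm]; omega, fun i j => ?_⟩
      have e : A₁ * (A₁ ^ k * A₂ ^ m) = A₁ ^ (k + 1) * A₂ ^ m := by
        rw [← mul_assoc, ← pow_succ']
      calc (![A₁, A₂] 0 * (tl.map (![A₁, A₂] ·)).prod) i j
          ≤ (![A₁, A₂] 0 * (A₁ ^ k * A₂ ^ m)) i j := by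
            refine entry_mul_le_mul_left ?_ hb i j
            simpa using h1
        _ = (A₁ ^ (k + 1) * A₂ ^ m) i j := by
            rw [show (![A₁, A₂] 0 : Matrix (Fin s) (Fin s) ℝ) = A₁ from rfl, e]
    · refine ⟨k, m + 1, by simp [← hkm]; omega, fun i j => ?_⟩
      have e2 : A₂ * (A₁ ^ k * A₂ ^ m) = (A₂ * A₁ ^ k) * A₂ ^ m := by rw [mul_assoc]
      have e3 : (A₁ ^ k * A₂) * A₂ ^ m = A₁ ^ k * A₂ ^ (m + 1) := by
        rw [mul_assoc, ← pow_succ']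
      calc (![A₁, A₂] 1 * (tl.map (![A₁, A₂] ·)).prod) i j
          ≤ (![A₁, A₂] 1 * (A₁ ^ k * A₂ ^ m)) i j := by
            refine entry_mul_le_mul_left ?_ hb i j
            simpa using h2
        _ = ((A₂ * A₁ ^ k) * A₂ ^ m) i j := by
            rw [show (![A₁, A₂] 1 : Matrix (Fin s) (Fin s) ℝ) = A₂ from rfl, e2]
        _ ≤ ((A₁ ^ k * A₂) * A₂ ^ m) i j :=
            entry_mul_le_mul_right (entry_pow_nonneg h2 m)
              (semicommute_pow h1 hle k) i j
        _ = (A₁ ^ k * A₂ ^ (m + 1)) i j := by rw [e3]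

end Sorting

lemma wordProd_eq_list {s n : ℕ} (A : Fin 2 → Matrix (Fin s) (Fin s) ℝ)
    (w : Fin n → Fin 2) :
    wordProd A w = (((List.ofFn w).reverse).map (A ·)).prod := by
  unfold wordProd
  congr 1
  rw [List.map_reverse, List.map_ofFn]
  rfl

lemma wordProd_const {s n : ℕ} (A : Fin 2 → Matrix (Fin s) (Fin s) ℝ) (a : Fin 2) :
    wordProd A (fun _ : Fin n => a) = (A a) ^ n := by
  unfold wordProd
  rw [List.ofFn_const, List.reverse_replicate, List.prod_replicate]

/-- If `A₂·A₁ ≤ A₁·A₂` entrywise for nonnegative-integer matrices then the JSR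
equals the maximum of the two spectral radii, and the pair has the finiteness
property. -/
theorem finiteness_property_of_semicommute {s : ℕ}
    (A₁ A₂ : Matrix (Fin s) (Fin s) ℝ)
    (h₁ : ∀ i j, ∃ k : ℕ, A₁ i j = k)
    (h₂ : ∀ i j, ∃ k : ℕ, A₂ i j = k)
    (hle : ∀ i j, (A₂ * A₁) i j ≤ (A₁ * A₂) i j) :
    JSR ![A₁, A₂] = max (specRad A₁) (specRad A₂) ∧
      FinitenessProperty ![A₁, A₂] := by
  have h1' : ∀ i j, 0 ≤ A₁ i j := fun i j => by
    obtain ⟨k, hk⟩ := h₁ i j; rw [hk]; exact Nat.cast_nonneg k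
  have h2' : ∀ i j, 0 ≤ A₂ i j := fun i j => by
    obtain ⟨k, hk⟩ := h₂ i j; rw [hk]; exact Nat.cast_nonneg k
  set r := max (specRad A₁) (specRad A₂) with hr
  have hr0 : 0 ≤ r := le_trans (specRad_nonneg A₁) (le_max_left _ _)
  -- boundedness facts
  have hbddsup : ∀ n : ℕ, BddAbove (Set.range fun w : Fin n → Fin 2 =>
      l2OpNorm (wordProd ![A₁, A₂] w) ^ (1 / (n : ℝ))) :=
    fun n => (Set.finite_range _).bddAbove
  have hterm_nonneg : ∀ (n : ℕ) (w : Fin n → Fin 2),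
      0 ≤ l2OpNorm (wordProd ![A₁, A₂] w) ^ (1 / (n : ℝ)) :=
    fun n w => Real.rpow_nonneg (l2OpNorm_nonneg _) _
  have hbddinf : BddBelow (Set.range fun n : {m : ℕ // 1 ≤ m} =>
      ⨆ w : Fin (n : ℕ) → Fin 2, l2OpNorm (wordProd ![A₁, A₂] w) ^ (1 / ((n : ℕ) : ℝ))) := by
    refine ⟨0, ?_⟩
    rintro x ⟨n, rfl⟩
    exact le_trans (hterm_nonneg n (fun _ => 0)) (le_ciSup (hbddsup n) _)
  -- the word product is entrywise nonneg
  have hword_nn : ∀ (n : ℕ) (w : Fin n → Fin 2), ∀ i j, 0 ≤ wordProd ![A₁, A₂] w i j := by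
    intro n w i j
    rw [wordProd_eq_list]
    exact list_prod_nonneg h1' h2' _ i j
  -- Lower bound : r ≤ JSR
  have hlower : r ≤ JSR ![A₁, A₂] := by
    refine le_ciInf fun n => ?_
    obtain ⟨n, hn⟩ := n
    refine max_le ?_ ?_
    · have hkey : specRad A₁ ≤ l2OpNorm (wordProd ![A₁, A₂] (fun _ : Fin n => 0)) ^ (1 / (n : ℝ)) := by
        rw [wordProd_const]
        refine (specRad_le_pow A₁ hn).trans ?_
        refine Real.rpow_le_rpow (norm_nonneg _) ?_ (by positivity)
        rw [← cT_pow]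
        exact clm_norm_le (entry_pow_nonneg h1' n) (fun i j => le_refl _)
      exact hkey.trans (le_ciSup (hbddsup n) _)
    · have hkey : specRad A₂ ≤ l2OpNorm (wordProd ![A₁, A₂] (fun _ : Fin n => 1)) ^ (1 / (n : ℝ)) := by
        rw [wordProd_const]
        refine (specRad_le_pow A₂ hn).trans ?_
        refine Real.rpow_le_rpow (norm_nonneg _) ?_ (by positivity)
        rw [← cT_pow]
        exact clm_norm_le (entry_pow_nonneg h2' n) (fun i j => le_refl _)
      exact hkey.trans (le_ciSup (hbddsup n) _)
  -- Upper bound : JSR ≤ r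
  have hupper : JSR ![A₁, A₂] ≤ r := by
    refine le_of_forall_pos_le_add fun ε hε => ?_
    set t := r + ε / 2 with htdef
    have ht0 : 0 < t := by positivity
    obtain ⟨C₁, hC₁1, hC₁⟩ := exists_pow_bound A₁
      (show specRad A₁ < t by have := le_max_left (specRad A₁) (specRad A₂); rw [htdef]; linarith)
    obtain ⟨C₂, hC₂1, hC₂⟩ := exists_pow_bound A₂
      (show specRad A₂ < t by have := le_max_right (specRad A₁) (specRad A₂); rw [htdef]; linarith)
    set C := C₁ * C₂ with hCdef
    have hC1 : 1 ≤ C := by nlinarith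
    have hC0 : 0 < C := by linarith
    have hq : 1 < (r + ε) / t := by
      rw [lt_div_iff₀ ht0]
      rw [htdef]; linarith
    -- C ^ (1/n) → 1
    have htend : Filter.Tendsto (fun n : ℕ => C ^ (1 / (n : ℝ))) Filter.atTop (nhds 1) := by
      have h0 : Filter.Tendsto (fun n : ℕ => 1 / (n : ℝ)) Filter.atTop (nhds 0) :=
        tendsto_one_div_atTop_nhds_zero_nat
      have hcont : ContinuousAt (fun y : ℝ => C ^ y) 0 :=
        Real.continuousAt_const_rpow (ne_of_gt hC0)
      have := hcont.tendsto.comp h0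
      rwa [Real.rpow_zero] at this
    obtain ⟨n, hn1, hnC⟩ : ∃ n : ℕ, 1 ≤ n ∧ C ^ (1 / (n : ℝ)) < (r + ε) / t := by
      have hev := (htend.eventually_lt_const hq).and (Filter.eventually_ge_atTop 1)
      obtain ⟨n, hn⟩ := hev.exists
      exact ⟨n, hn.2, hn.1⟩
    have hn0 : ((n : ℝ)) ≠ 0 := by positivity
    -- JSR ≤ value at n
    refine le_trans (ciInf_le hbddinf ⟨n, hn1⟩) ?_
    refine ciSup_le fun w => ?_
    -- bound the word product
    obtain ⟨k, m, hkm, hb⟩ := list_prod_le_sorted h1' h2' hle ((List.ofFn w).reverse)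
    have hkmn : k + m = n := by simpa using hkm
    have hword_le : l2OpNorm (wordProd ![A₁, A₂] w) ≤ C * t ^ n := by
      calc l2OpNorm (wordProd ![A₁, A₂] w)
          ≤ ‖Matrix.toEuclideanCLM (𝕜 := ℂ) ((wordProd ![A₁, A₂] w).map Complex.ofReal)‖ :=
            real_norm_le_clm_norm _
        _ ≤ l2OpNorm (A₁ ^ k * A₂ ^ m) := by
            refine clm_norm_le (hword_nn n w) ?_
            intro i j
            rw [wordProd_eq_list]
            exact hb i j
        _ ≤ l2OpNorm (A₁ ^ k) * l2OpNorm (A₂ ^ m) := l2OpNorm_mul_le _ _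
        _ ≤ (C₁ * t ^ k) * (C₂ * t ^ m) := by
            refine mul_le_mul (hC₁ k) (hC₂ m) (l2OpNorm_nonneg _) ?_
            positivity
        _ = C * t ^ n := by rw [hCdef, ← hkmn, pow_add]; ring
    calc l2OpNorm (wordProd ![A₁, A₂] w) ^ (1 / (n : ℝ))
        ≤ (C * t ^ n) ^ (1 / (n : ℝ)) :=
          Real.rpow_le_rpow (l2OpNorm_nonneg _) hword_le (by positivity)
      _ = C ^ (1 / (n : ℝ)) * t := by
          rw [Real.mul_rpow hC0.le (by positivity), ← Real.rpow_natCast t n,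
            ← Real.rpow_mul ht0.le, mul_one_div, div_self hn0, Real.rpow_one]
      _ ≤ ((r + ε) / t) * t := by
          exact mul_le_mul_of_nonneg_right hnC.le ht0.le
      _ = r + ε := div_mul_cancel₀ _ (ne_of_gt ht0)
  have hJSR : JSR ![A₁, A₂] = r := le_antisymm hupper hlower
  refine ⟨hJSR, ?_⟩
  -- finiteness property
  rcases le_total (specRad A₂) (specRad A₁) with h | h
  · refine ⟨1, le_refl 1, fun _ => 0, ?_⟩
    rw [wordProd_const, pow_one, hJSR]
    rw [show (![A₁, A₂] 0 : Matrix (Fin s) (Fin s) ℝ) = A₁ from rfl]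
    rw [Nat.cast_one, div_one, Real.rpow_one, hr, max_eq_left h]
  · refine ⟨1, le_refl 1, fun _ => 1, ?_⟩
    rw [wordProd_const, pow_one, hJSR]
    rw [show (![A₁, A₂] 1 : Matrix (Fin s) (Fin s) ℝ) = A₂ from rfl]
    rw [Nat.cast_one, div_one, Real.rpow_one, hr, max_eq_right h]
end
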